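/- arXiv:2306.02983 — 6 statements merged into one kernel-verified Lean document; each statement's English description precedes it below -/
import Mathlib

section
/- Pruning exactly restricts the semantics to traces avoiding the pruned lifelines: for every ℓ ⊆ L and interactions i, i' ∈ I, if i ⤳ℓ i' then σ(i') = { t ∈ σ(i) | every action a occurring in t satisfies θ(a) ∉ ℓ }. -/
/-!
Pruning only deletes `alt` branches and replaces loops by `∅`, so `i'` embeds into `i` in the sense
of `Embeds` (adding alternatives, replacing `∅` by a loop), and `Embeds` is a simulation for
execution: hence `σ(i') ⊆ σ(i)`. Every action `i'` ever performs already occurs in `i'`, and pruning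
keeps no action on `ℓ`.

Conversely, a step `i →a i₀` with `θ(a) ∉ ℓ` and `i₀ ↓ ℓ` (forced when the rest of the trace avoids
`ℓ`) is matched by a step `i' →a j` such that the pruning of `i₀` embeds into `j`; equality fails
since an `alt` residue of `i` may prune to one branch while `i'` still delays both. The `cr`-right
rule prunes the left operand by `{θ(a)} \ ℓ'`; this commutes with pruning by `ℓ` because pruning is
deterministic and pruning by `ℓ` then by `s` is pruning by `ℓ ∪ s`.
-/

/-- An atomic communication action: the emission (`isEmission = true`) or
reception (`isEmission = false`) of a message on a lifeline. -/
structure MyAction (L M : Type) where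
  lifeline : L
  isEmission : Bool
  message : M

/-- Interaction terms: constants are actions and the empty interaction,
`loopS` is unary, and `strict`, `alt` and `cr ℓ` (for every `ℓ ⊆ L`) are binary.
`seq = cr ∅` and `par = cr Set.univ`. -/
inductive Interaction (L M : Type) : Type where
  | empty : Interaction L M
  | act : MyAction L M → Interaction L M
  | loopS : Interaction L M → Interaction L M
  | strict : Interaction L M → Interaction L M → Interaction L M
  | alt : Interaction L M → Interaction L M → Interaction L M
  | cr : Set L → Interaction L M → Interaction L M → Interaction L M

namespace Interaction

variable {L M : Type}

/-- The evasion predicate `i ↓ ℓ`. -/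
inductive Evades : Interaction L M → Set L → Prop where
  | empty (ℓ : Set L) : Evades .empty ℓ
  | act (a : MyAction L M) (ℓ : Set L) : a.lifeline ∉ ℓ → Evades (.act a) ℓ
  | altL {i1 i2 : Interaction L M} {ℓ} : Evades i1 ℓ → Evades (.alt i1 i2) ℓ
  | altR {i1 i2 : Interaction L M} {ℓ} : Evades i2 ℓ → Evades (.alt i1 i2) ℓ
  | strict {i1 i2 : Interaction L M} {ℓ} : Evades i1 ℓ → Evades i2 ℓ →
      Evades (.strict i1 i2) ℓ
  | cr {i1 i2 : Interaction L M} {ℓ' ℓ} : Evades i1 ℓ → Evades i2 ℓ →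
      Evades (.cr ℓ' i1 i2) ℓ
  | loopS (i1 : Interaction L M) (ℓ : Set L) : Evades (.loopS i1) ℓ

/-- The pruning relation `i ⤳ℓ i'`. -/
inductive Prune : Interaction L M → Set L → Interaction L M → Prop where
  | empty (ℓ : Set L) : Prune .empty ℓ .empty
  | act (a : MyAction L M) (ℓ : Set L) : a.lifeline ∉ ℓ → Prune (.act a) ℓ (.act a)
  | altL {i1 i2 i1' : Interaction L M} {ℓ} : Prune i1 ℓ i1' → ¬ Evades i2 ℓ →
      Prune (.alt i1 i2) ℓ i1'
  | altR {i1 i2 i2' : Interaction L M} {ℓ} : Prune i2 ℓ i2' → ¬ Evades i1 ℓ →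
      Prune (.alt i1 i2) ℓ i2'
  | altBoth {i1 i2 i1' i2' : Interaction L M} {ℓ} : Prune i1 ℓ i1' → Prune i2 ℓ i2' →
      Prune (.alt i1 i2) ℓ (.alt i1' i2')
  | strict {i1 i2 i1' i2' : Interaction L M} {ℓ} : Prune i1 ℓ i1' → Prune i2 ℓ i2' →
      Prune (.strict i1 i2) ℓ (.strict i1' i2')
  | cr {i1 i2 i1' i2' : Interaction L M} {ℓ' ℓ} : Prune i1 ℓ i1' → Prune i2 ℓ i2' →
      Prune (.cr ℓ' i1 i2) ℓ (.cr ℓ' i1' i2')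
  | loopS {i1 i1' : Interaction L M} {ℓ} : Prune i1 ℓ i1' →
      Prune (.loopS i1) ℓ (.loopS i1')
  | loopSElim {i1 : Interaction L M} {ℓ} : ¬ Evades i1 ℓ → Prune (.loopS i1) ℓ .empty

/-- The non-expression predicate `i ̸→a`. -/
inductive NoExpr : Interaction L M → MyAction L M → Prop where
  | empty (a : MyAction L M) : NoExpr .empty a
  | act {a' a : MyAction L M} : a' ≠ a → NoExpr (.act a') a
  | loopS {i1 : Interaction L M} {a} : NoExpr i1 a → NoExpr (.loopS i1) a
  | strictNoEvade {i1 i2 : Interaction L M} {a} : NoExpr i1 a →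
      ¬ Evades i1 Set.univ → NoExpr (.strict i1 i2) a
  | strictBoth {i1 i2 : Interaction L M} {a} : NoExpr i1 a →
      NoExpr i2 a → NoExpr (.strict i1 i2) a
  | crNoEvade {i1 i2 : Interaction L M} {ℓ a} : NoExpr i1 a →
      ¬ Evades i1 ({a.lifeline} \ ℓ) → NoExpr (.cr ℓ i1 i2) a
  | crBoth {i1 i2 : Interaction L M} {ℓ a} : NoExpr i1 a →
      NoExpr i2 a → NoExpr (.cr ℓ i1 i2) a
  | alt {i1 i2 : Interaction L M} {a} : NoExpr i1 a → NoExpr i2 a →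
      NoExpr (.alt i1 i2) a

/-- The execution relation `i →a i'`. -/
inductive Exec : Interaction L M → MyAction L M → Interaction L M → Prop where
  | act (a : MyAction L M) : Exec (.act a) a .empty
  | loop {i1 i1' : Interaction L M} {a} : Exec i1 a i1' →
      Exec (.loopS i1) a (.strict i1' (.loopS i1))
  | strictL {i1 i2 i1' : Interaction L M} {a} : Exec i1 a i1' →
      Exec (.strict i1 i2) a (.strict i1' i2)
  | crL {i1 i2 i1' : Interaction L M} {ℓ a} : Exec i1 a i1' →
      Exec (.cr ℓ i1 i2) a (.cr ℓ i1' i2)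
  | strictR {i1 i2 i2' : Interaction L M} {a} : Exec i2 a i2' → Evades i1 Set.univ →
      Exec (.strict i1 i2) a i2'
  | crR {i1 i2 i1' i2' : Interaction L M} {ℓ a} : Exec i2 a i2' →
      Prune i1 ({a.lifeline} \ ℓ) i1' → Exec (.cr ℓ i1 i2) a (.cr ℓ i1' i2')
  | altChoiceL {i1 i2 i1' : Interaction L M} {a} : Exec i1 a i1' → NoExpr i2 a →
      Exec (.alt i1 i2) a i1'
  | altChoiceR {i1 i2 i2' : Interaction L M} {a} : Exec i2 a i2' → NoExpr i1 a →
      Exec (.alt i1 i2) a i2'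
  | altDelay {i1 i2 i1' i2' : Interaction L M} {a} : Exec i1 a i1' → Exec i2 a i2' →
      Exec (.alt i1 i2) a (.alt i1' i2')

/-- The trace semantics `σ(i)`, as a predicate: `Sem i t` iff `t ∈ σ(i)`. -/
inductive Sem : Interaction L M → List (MyAction L M) → Prop where
  | nil {i : Interaction L M} : Evades i Set.univ → Sem i []
  | cons {i i' : Interaction L M} {a t} : Exec i a i' → Sem i' t → Sem i (a :: t)

/-- One execution step: `i → i'` iff `i →a i'` for some action `a`. -/
def Step (i i' : Interaction L M) : Prop := ∃ a, Exec i a i'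

/-- `reach i = { i' | i →* i' }`. -/
def Reach (i : Interaction L M) : Set (Interaction L M) :=
  {i' | Relation.ReflTransGen Step i i'}

/-- One-step rewriting by the simplification system `R`, closed under contexts. -/
inductive Rw : Interaction L M → Interaction L M → Prop where
  | strictEmptyL (x : Interaction L M) : Rw (.strict .empty x) x
  | strictEmptyR (x : Interaction L M) : Rw (.strict x .empty) x
  | crEmptyL (ℓ : Set L) (x : Interaction L M) : Rw (.cr ℓ .empty x) x
  | crEmptyR (ℓ : Set L) (x : Interaction L M) : Rw (.cr ℓ x .empty) x
  | altEmptyLoop (x : Interaction L M) : Rw (.alt .empty (.loopS x)) (.loopS x)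
  | altLoopEmpty (x : Interaction L M) : Rw (.alt (.loopS x) .empty) (.loopS x)
  | altEmptyEmpty : Rw (Interaction.alt (L := L) (M := M) .empty .empty) .empty
  | loopEmpty : Rw (Interaction.loopS (L := L) (M := M) .empty) .empty
  | loopCongr {i i' : Interaction L M} : Rw i i' → Rw (.loopS i) (.loopS i')
  | strictCongrL {i1 i1' i2 : Interaction L M} : Rw i1 i1' →
      Rw (.strict i1 i2) (.strict i1' i2)
  | strictCongrR {i1 i2 i2' : Interaction L M} : Rw i2 i2' →
      Rw (.strict i1 i2) (.strict i1 i2')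
  | altCongrL {i1 i1' i2 : Interaction L M} : Rw i1 i1' → Rw (.alt i1 i2) (.alt i1' i2)
  | altCongrR {i1 i2 i2' : Interaction L M} : Rw i2 i2' → Rw (.alt i1 i2) (.alt i1 i2')
  | crCongrL {i1 i1' i2 : Interaction L M} {ℓ} : Rw i1 i1' →
      Rw (.cr ℓ i1 i2) (.cr ℓ i1' i2)
  | crCongrR {i1 i2 i2' : Interaction L M} {ℓ} : Rw i2 i2' →
      Rw (.cr ℓ i1 i2) (.cr ℓ i1 i2')

theorem Evades.anti {i : Interaction L M} {s t : Set L} (h : Evades i t) (hst : s ⊆ t) :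
    Evades i s := by
  induction h with
  | empty => exact .empty _
  | act a _ ha => exact .act _ _ fun hc => ha (hst hc)
  | altL _ ih => exact .altL (ih hst)
  | altR _ ih => exact .altR (ih hst)
  | strict _ _ ih1 ih2 => exact .strict (ih1 hst) (ih2 hst)
  | cr _ _ ih1 ih2 => exact .cr (ih1 hst) (ih2 hst)
  | loopS => exact .loopS _ _

theorem evades_emptyset : ∀ i : Interaction L M, Evades i ∅
  | .empty => .empty _
  | .act a => .act a _ (Set.notMem_empty _)
  | .loopS i => .loopS i _
  | .strict i1 i2 => .strict (evades_emptyset i1) (evades_emptyset i2)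
  | .alt i1 _ => .altL (evades_emptyset i1)
  | .cr _ i1 i2 => .cr (evades_emptyset i1) (evades_emptyset i2)

section EvadesIff

variable {i1 i2 : Interaction L M} {s : Set L}

theorem evades_act_iff {a : MyAction L M} : Evades (.act a) s ↔ a.lifeline ∉ s :=
  ⟨fun h => by cases h; assumption, .act a s⟩

theorem evades_alt_iff : Evades (.alt i1 i2) s ↔ Evades i1 s ∨ Evades i2 s :=
  ⟨fun h => by cases h <;> simp_all, fun h => h.elim .altL .altR⟩

theorem evades_strict_iff : Evades (.strict i1 i2) s ↔ Evades i1 s ∧ Evades i2 s :=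
  ⟨fun h => by cases h; constructor <;> assumption, fun h => .strict h.1 h.2⟩

theorem evades_cr_iff {ℓ' : Set L} : Evades (.cr ℓ' i1 i2) s ↔ Evades i1 s ∧ Evades i2 s :=
  ⟨fun h => by cases h; constructor <;> assumption, fun h => .cr h.1 h.2⟩

end EvadesIff

theorem Evades.exists_prune {i : Interaction L M} {s : Set L} (h : Evades i s) :
    ∃ j, Prune i s j := by
  induction i with
  | empty => exact ⟨_, .empty s⟩
  | act a => exact ⟨_, .act a s (evades_act_iff.1 h)⟩
  | loopS i1 ih =>
    by_cases h1 : Evades i1 s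
    · obtain ⟨j1, hj1⟩ := ih h1
      exact ⟨_, .loopS hj1⟩
    · exact ⟨_, .loopSElim h1⟩
  | strict i1 i2 ih1 ih2 =>
    obtain ⟨⟨j1, hj1⟩, ⟨j2, hj2⟩⟩ := (evades_strict_iff.1 h).imp ih1 ih2
    exact ⟨_, .strict hj1 hj2⟩
  | cr ℓ' i1 i2 ih1 ih2 =>
    obtain ⟨⟨j1, hj1⟩, ⟨j2, hj2⟩⟩ := (evades_cr_iff.1 h).imp ih1 ih2
    exact ⟨_, .cr hj1 hj2⟩
  | alt i1 i2 ih1 ih2 =>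
    by_cases h1 : Evades i1 s <;> by_cases h2 : Evades i2 s
    · obtain ⟨j1, hj1⟩ := ih1 h1
      obtain ⟨j2, hj2⟩ := ih2 h2
      exact ⟨_, .altBoth hj1 hj2⟩
    · obtain ⟨j1, hj1⟩ := ih1 h1
      exact ⟨_, .altL hj1 h2⟩
    · obtain ⟨j2, hj2⟩ := ih2 h2
      exact ⟨_, .altR hj2 h1⟩
    · exact absurd (evades_alt_iff.1 h) (by tauto)

section Prune

variable {i j : Interaction L M} {ℓ s : Set L}

theorem Prune.evades_iff (h : Prune i ℓ j) : Evades j s ↔ Evades i (ℓ ∪ s) := by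
  induction h with
  | empty => exact iff_of_true (.empty _) (.empty _)
  | act a _ ha => simp [evades_act_iff, ha]
  | altL _ h2 ih =>
    rw [evades_alt_iff, ih, or_iff_left fun hc => h2 (hc.anti Set.subset_union_left)]
  | altR _ h1 ih =>
    rw [evades_alt_iff, ih, or_iff_right fun hc => h1 (hc.anti Set.subset_union_left)]
  | altBoth _ _ ih1 ih2 => rw [evades_alt_iff, evades_alt_iff, ih1, ih2]
  | strict _ _ ih1 ih2 => rw [evades_strict_iff, evades_strict_iff, ih1, ih2]
  | cr _ _ ih1 ih2 => rw [evades_cr_iff, evades_cr_iff, ih1, ih2]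
  | loopS => exact iff_of_true (.loopS _ _) (.loopS _ _)
  | loopSElim => exact iff_of_true (.empty _) (.loopS _ _)

theorem Prune.evades (h : Prune i ℓ j) : Evades i ℓ := by
  simpa using h.evades_iff.1 (evades_emptyset j)

theorem Prune.evades_of_evades {u : Set L} (h : Prune i ℓ j) (hj : Evades j u) :
    Evades i u :=
  (h.evades_iff.1 hj).anti Set.subset_union_right

theorem Prune.evades_univ (h : Prune i ℓ j) (hi : Evades i Set.univ) :
    Evades j Set.univ :=
  h.evades_iff.2 (by rwa [Set.union_univ])

theorem Prune.unique {k : Interaction L M} (hj : Prune i ℓ j) (hk : Prune i ℓ k) :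
    j = k := by
  induction hj generalizing k with
  | empty => cases hk; rfl
  | act => cases hk; rfl
  | altL _ h2 ih => cases hk with
    | altL hk1 _ => exact ih hk1
    | altR hk2 _ => exact absurd hk2.evades h2
    | altBoth _ hk2 => exact absurd hk2.evades h2
  | altR _ h1 ih => cases hk with
    | altL hk1 _ => exact absurd hk1.evades h1
    | altR hk2 _ => exact ih hk2
    | altBoth hk1 _ => exact absurd hk1.evades h1
  | altBoth h1 h2 ih1 ih2 => cases hk with
    | altL _ hn => exact absurd h2.evades hn
    | altR _ hn => exact absurd h1.evades hn
    | altBoth hk1 hk2 => rw [ih1 hk1, ih2 hk2]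
  | strict _ _ ih1 ih2 => cases hk with
    | strict hk1 hk2 => rw [ih1 hk1, ih2 hk2]
  | cr _ _ ih1 ih2 => cases hk with
    | cr hk1 hk2 => rw [ih1 hk1, ih2 hk2]
  | loopS h1 ih => cases hk with
    | loopS hk1 => rw [ih hk1]
    | loopSElim hn => exact absurd h1.evades hn
  | loopSElim hn => cases hk with
    | loopS hk1 => exact absurd hk1.evades hn
    | loopSElim => rfl

theorem Prune.trans {q : Interaction L M} (hj : Prune i ℓ j) (hq : Prune j s q) :
    Prune i (ℓ ∪ s) q := by
  induction hj generalizing q with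
  | empty => cases hq; exact .empty _
  | act a _ ha => cases hq with
    | act _ _ ha' => exact .act a _ (by simp [ha, ha'])
  | altL _ h2 ih => exact .altL (ih hq) fun hc => h2 (hc.anti Set.subset_union_left)
  | altR _ h1 ih => exact .altR (ih hq) fun hc => h1 (hc.anti Set.subset_union_left)
  | altBoth h1 h2 ih1 ih2 => cases hq with
    | altL hq1 hn => exact .altL (ih1 hq1) (mt h2.evades_iff.2 hn)
    | altR hq2 hn => exact .altR (ih2 hq2) (mt h1.evades_iff.2 hn)
    | altBoth hq1 hq2 => exact .altBoth (ih1 hq1) (ih2 hq2)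
  | strict _ _ ih1 ih2 => cases hq with
    | strict hq1 hq2 => exact .strict (ih1 hq1) (ih2 hq2)
  | cr _ _ ih1 ih2 => cases hq with
    | cr hq1 hq2 => exact .cr (ih1 hq1) (ih2 hq2)
  | loopS h1 ih => cases hq with
    | loopS hq1 => exact .loopS (ih hq1)
    | loopSElim hn => exact .loopSElim (mt h1.evades_iff.2 hn)
  | loopSElim hn =>
    cases hq
    exact .loopSElim fun hc => hn (hc.anti Set.subset_union_left)

-- Both sides of the square are the pruning of `i` by `ℓ ∪ s`, which is unique.
theorem Prune.comm {k : Interaction L M} (hj : Prune i ℓ j) (hk : Prune i s k)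
    (hkℓ : Evades k ℓ) : ∃ q, Prune j s q ∧ Prune k ℓ q := by
  have hi : Evades i (ℓ ∪ s) := Set.union_comm s ℓ ▸ hk.evades_iff.1 hkℓ
  obtain ⟨q, hq⟩ := (hj.evades_iff.2 hi).exists_prune
  obtain ⟨q', hq'⟩ := hkℓ.exists_prune
  have hiq' : Prune i (ℓ ∪ s) q' := Set.union_comm s ℓ ▸ hk.trans hq'
  exact ⟨q, hq, (hj.trans hq).unique hiq' ▸ hq'⟩

theorem NoExpr.prune {a : MyAction L M} (hn : NoExpr i a) (h : Prune i ℓ j) :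
    NoExpr j a := by
  induction h with
  | empty | act => exact hn
  | altL _ _ ih => cases hn with
    | alt h1 _ => exact ih h1
  | altR _ _ ih => cases hn with
    | alt _ h2 => exact ih h2
  | altBoth _ _ ih1 ih2 => cases hn with
    | alt h1 h2 => exact .alt (ih1 h1) (ih2 h2)
  | strict hp1 _ ih1 ih2 => cases hn with
    | strictNoEvade h1 hne => exact .strictNoEvade (ih1 h1) (mt hp1.evades_of_evades hne)
    | strictBoth h1 h2 => exact .strictBoth (ih1 h1) (ih2 h2)
  | cr hp1 _ ih1 ih2 => cases hn with
    | crNoEvade h1 hne => exact .crNoEvade (ih1 h1) (mt hp1.evades_of_evades hne)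
    | crBoth h1 h2 => exact .crBoth (ih1 h1) (ih2 h2)
  | loopS _ ih => cases hn with
    | loopS h1 => exact .loopS (ih h1)
  | loopSElim => exact .empty a

end Prune

theorem exists_exec_or_noExpr (i : Interaction L M) (a : MyAction L M) :
    (∃ i', Exec i a i') ∨ NoExpr i a := by
  induction i with
  | empty => exact .inr (.empty a)
  | act a' =>
    by_cases h : a' = a
    · subst h
      exact .inl ⟨_, .act a'⟩
    · exact .inr (.act h)
  | loopS i1 ih =>
    rcases ih with ⟨j, hj⟩ | hn
    · exact .inl ⟨_, .loop hj⟩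
    · exact .inr (.loopS hn)
  | strict i1 i2 ih1 ih2 =>
    rcases ih1 with ⟨j, hj⟩ | hn1
    · exact .inl ⟨_, .strictL hj⟩
    by_cases he : Evades i1 Set.univ
    · rcases ih2 with ⟨j, hj⟩ | hn2
      · exact .inl ⟨_, .strictR hj he⟩
      · exact .inr (.strictBoth hn1 hn2)
    · exact .inr (.strictNoEvade hn1 he)
  | cr ℓ' i1 i2 ih1 ih2 =>
    rcases ih1 with ⟨j, hj⟩ | hn1
    · exact .inl ⟨_, .crL hj⟩
    by_cases he : Evades i1 ({a.lifeline} \ ℓ')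
    · rcases ih2 with ⟨j, hj⟩ | hn2
      · obtain ⟨i1p, hp⟩ := he.exists_prune
        exact .inl ⟨_, .crR hj hp⟩
      · exact .inr (.crBoth hn1 hn2)
    · exact .inr (.crNoEvade hn1 he)
  | alt i1 i2 ih1 ih2 =>
    rcases ih1 with ⟨j1, hj1⟩ | hn1 <;> rcases ih2 with ⟨j2, hj2⟩ | hn2
    · exact .inl ⟨_, .altDelay hj1 hj2⟩
    · exact .inl ⟨_, .altChoiceL hj1 hn2⟩
    · exact .inl ⟨_, .altChoiceR hj2 hn1⟩
    · exact .inr (.alt hn1 hn2)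

theorem Exec.evades_of_evades {i i0 : Interaction L M} {a : MyAction L M} {ℓ : Set L}
    (h : Exec i a i0) (ha : a.lifeline ∉ ℓ) (he : Evades i0 ℓ) : Evades i ℓ := by
  induction h with
  | act => exact .act _ _ ha
  | loop => exact .loopS _ _
  | strictL _ ih =>
    obtain ⟨h1, h2⟩ := evades_strict_iff.1 he
    exact .strict (ih ha h1) h2
  | crL _ ih =>
    obtain ⟨h1, h2⟩ := evades_cr_iff.1 he
    exact .cr (ih ha h1) h2
  | strictR _ hev ih => exact .strict (hev.anti (Set.subset_univ _)) (ih ha he)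
  | crR _ hp ih =>
    obtain ⟨h1, h2⟩ := evades_cr_iff.1 he
    exact .cr (hp.evades_of_evades h1) (ih ha h2)
  | altChoiceL _ _ ih => exact .altL (ih ha he)
  | altChoiceR _ _ ih => exact .altR (ih ha he)
  | altDelay _ _ ih1 ih2 => exact (evades_alt_iff.1 he).imp (ih1 ha) (ih2 ha) |>.elim .altL .altR

theorem Sem.evades_of_forall {i : Interaction L M} {t : List (MyAction L M)} {ℓ : Set L}
    (hs : Sem i t) (hav : ∀ a ∈ t, a.lifeline ∉ ℓ) : Evades i ℓ := by
  induction hs with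
  | nil he => exact he.anti (Set.subset_univ _)
  | cons hx _ ih =>
    exact hx.evades_of_evades (hav _ List.mem_cons_self)
      (ih fun b hb => hav b (List.mem_cons_of_mem _ hb))

inductive Embeds : Interaction L M → Interaction L M → Prop where
  | refl (i : Interaction L M) : Embeds i i
  | altIntroL {x y : Interaction L M} (z : Interaction L M) :
      Embeds x y → Embeds x (.alt y z)
  | altIntroR {x z : Interaction L M} (y : Interaction L M) :
      Embeds x z → Embeds x (.alt y z)
  | emptyLoop (z : Interaction L M) : Embeds .empty (.loopS z)
  | loopS {x y : Interaction L M} : Embeds x y → Embeds (.loopS x) (.loopS y)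
  | strict {x1 y1 x2 y2 : Interaction L M} : Embeds x1 y1 → Embeds x2 y2 →
      Embeds (.strict x1 x2) (.strict y1 y2)
  | alt {x1 y1 x2 y2 : Interaction L M} : Embeds x1 y1 → Embeds x2 y2 →
      Embeds (.alt x1 x2) (.alt y1 y2)
  | cr (ℓ' : Set L) {x1 y1 x2 y2 : Interaction L M} : Embeds x1 y1 → Embeds x2 y2 →
      Embeds (.cr ℓ' x1 x2) (.cr ℓ' y1 y2)

section Embeds

variable {x y : Interaction L M} {s : Set L}

theorem Prune.embeds {i j : Interaction L M} (h : Prune i s j) : Embeds j i := by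
  induction h with
  | empty | act => exact .refl _
  | altL _ _ ih => exact .altIntroL _ ih
  | altR _ _ ih => exact .altIntroR _ ih
  | altBoth _ _ ih1 ih2 => exact .alt ih1 ih2
  | strict _ _ ih1 ih2 => exact .strict ih1 ih2
  | cr _ _ ih1 ih2 => exact .cr _ ih1 ih2
  | loopS _ ih => exact .loopS ih
  | loopSElim => exact .emptyLoop _

theorem Embeds.evades (h : Embeds x y) (hx : Evades x s) : Evades y s := by
  induction h with
  | refl => exact hx
  | altIntroL _ _ ih => exact .altL (ih hx)
  | altIntroR _ _ ih => exact .altR (ih hx)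
  | emptyLoop | loopS => exact .loopS _ _
  | strict _ _ ih1 ih2 =>
    obtain ⟨h1, h2⟩ := evades_strict_iff.1 hx
    exact .strict (ih1 h1) (ih2 h2)
  | alt _ _ ih1 ih2 => exact (evades_alt_iff.1 hx).imp ih1 ih2 |>.elim .altL .altR
  | cr _ _ _ ih1 ih2 =>
    obtain ⟨h1, h2⟩ := evades_cr_iff.1 hx
    exact .cr (ih1 h1) (ih2 h2)

theorem Prune.alt_left {i1 j1 : Interaction L M} (i2 : Interaction L M)
    (h : Prune i1 s j1) (hx : Embeds x j1) : ∃ p, Prune (.alt i1 i2) s p ∧ Embeds x p := by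
  by_cases h2 : Evades i2 s
  · obtain ⟨j2, hj2⟩ := h2.exists_prune
    exact ⟨_, .altBoth h hj2, .altIntroL _ hx⟩
  · exact ⟨_, .altL h h2, hx⟩

theorem Prune.alt_right {i2 j2 : Interaction L M} (i1 : Interaction L M)
    (h : Prune i2 s j2) (hx : Embeds x j2) : ∃ p, Prune (.alt i1 i2) s p ∧ Embeds x p := by
  by_cases h1 : Evades i1 s
  · obtain ⟨j1, hj1⟩ := h1.exists_prune
    exact ⟨_, .altBoth hj1 h, .altIntroR _ hx⟩
  · exact ⟨_, .altR h h1, hx⟩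

theorem exists_prune_loopS (z : Interaction L M) (s : Set L) :
    ∃ p, Prune (.loopS z) s p ∧ Embeds .empty p := by
  by_cases hz : Evades z s
  · obtain ⟨zp, hzp⟩ := hz.exists_prune
    exact ⟨_, .loopS hzp, .emptyLoop _⟩
  · exact ⟨_, .loopSElim hz, .refl _⟩

theorem Embeds.prune {xp : Interaction L M} (h : Embeds x y) (hp : Prune x s xp) :
    ∃ yp, Prune y s yp ∧ Embeds xp yp := by
  induction h generalizing xp with
  | refl => exact ⟨_, hp, .refl _⟩
  | altIntroL z _ ih =>
    obtain ⟨yp, hyp, hle⟩ := ih hp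
    exact hyp.alt_left z hle
  | altIntroR y _ ih =>
    obtain ⟨zp, hzp, hle⟩ := ih hp
    exact hzp.alt_right y hle
  | emptyLoop z =>
    cases hp
    exact exists_prune_loopS z s
  | loopS _ ih => cases hp with
    | loopS hp1 =>
      obtain ⟨yp1, hyp1, hle⟩ := ih hp1
      exact ⟨_, .loopS hyp1, .loopS hle⟩
    | loopSElim => exact exists_prune_loopS _ s
  | strict _ _ ih1 ih2 => cases hp with
    | strict hp1 hp2 =>
      obtain ⟨y1p, hy1p, hle1⟩ := ih1 hp1
      obtain ⟨y2p, hy2p, hle2⟩ := ih2 hp2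
      exact ⟨_, .strict hy1p hy2p, .strict hle1 hle2⟩
  | cr ℓ' _ _ ih1 ih2 => cases hp with
    | cr hp1 hp2 =>
      obtain ⟨y1p, hy1p, hle1⟩ := ih1 hp1
      obtain ⟨y2p, hy2p, hle2⟩ := ih2 hp2
      exact ⟨_, .cr hy1p hy2p, .cr ℓ' hle1 hle2⟩
  | alt _ _ ih1 ih2 => cases hp with
    | altL hp1 _ =>
      obtain ⟨y1p, hy1p, hle1⟩ := ih1 hp1
      exact hy1p.alt_left _ hle1
    | altR hp2 _ =>
      obtain ⟨y2p, hy2p, hle2⟩ := ih2 hp2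
      exact hy2p.alt_right _ hle2
    | altBoth hp1 hp2 =>
      obtain ⟨y1p, hy1p, hle1⟩ := ih1 hp1
      obtain ⟨y2p, hy2p, hle2⟩ := ih2 hp2
      exact ⟨_, .altBoth hy1p hy2p, .alt hle1 hle2⟩

theorem Exec.alt_left {i1 j1 : Interaction L M} {a : MyAction L M} (i2 : Interaction L M)
    (h : Exec i1 a j1) (hx : Embeds x j1) : ∃ p, Exec (.alt i1 i2) a p ∧ Embeds x p := by
  rcases exists_exec_or_noExpr i2 a with ⟨j2, hj2⟩ | hn
  · exact ⟨_, .altDelay h hj2, .altIntroL _ hx⟩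
  · exact ⟨_, .altChoiceL h hn, hx⟩

theorem Exec.alt_right {i2 j2 : Interaction L M} {a : MyAction L M} (i1 : Interaction L M)
    (h : Exec i2 a j2) (hx : Embeds x j2) : ∃ p, Exec (.alt i1 i2) a p ∧ Embeds x p := by
  rcases exists_exec_or_noExpr i1 a with ⟨j1, hj1⟩ | hn
  · exact ⟨_, .altDelay hj1 h, .altIntroR _ hx⟩
  · exact ⟨_, .altChoiceR h hn, hx⟩

theorem Embeds.exec {a : MyAction L M} {x' : Interaction L M} (h : Embeds x y)
    (hx : Exec x a x') : ∃ y', Exec y a y' ∧ Embeds x' y' := by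
  induction h generalizing x' with
  | refl => exact ⟨_, hx, .refl _⟩
  | altIntroL z _ ih =>
    obtain ⟨y1, hy1, hle⟩ := ih hx
    exact hy1.alt_left z hle
  | altIntroR y _ ih =>
    obtain ⟨z1, hz1, hle⟩ := ih hx
    exact hz1.alt_right y hle
  | emptyLoop => cases hx
  | loopS h ih => cases hx with
    | loop hx1 =>
      obtain ⟨y1', hy1, hle⟩ := ih hx1
      exact ⟨_, .loop hy1, .strict hle (.loopS h)⟩
  | strict h1 h2 ih1 ih2 => cases hx with
    | strictL hx1 =>
      obtain ⟨y1', hy1, hle⟩ := ih1 hx1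
      exact ⟨_, .strictL hy1, .strict hle h2⟩
    | strictR hx2 hev =>
      obtain ⟨y2', hy2, hle⟩ := ih2 hx2
      exact ⟨y2', .strictR hy2 (h1.evades hev), hle⟩
  | cr ℓ' h1 h2 ih1 ih2 => cases hx with
    | crL hx1 =>
      obtain ⟨y1', hy1, hle⟩ := ih1 hx1
      exact ⟨_, .crL hy1, .cr ℓ' hle h2⟩
    | crR hx2 hp =>
      obtain ⟨y1p, hy1p, hlep⟩ := h1.prune hp
      obtain ⟨y2', hy2, hle2⟩ := ih2 hx2
      exact ⟨_, .crR hy2 hy1p, .cr ℓ' hlep hle2⟩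
  | alt _ _ ih1 ih2 => cases hx with
    | altChoiceL hx1 _ =>
      obtain ⟨y1', hy1, hle⟩ := ih1 hx1
      exact hy1.alt_left _ hle
    | altChoiceR hx2 _ =>
      obtain ⟨y2', hy2, hle⟩ := ih2 hx2
      exact hy2.alt_right _ hle
    | altDelay hx1 hx2 =>
      obtain ⟨y1', hy1, hle1⟩ := ih1 hx1
      obtain ⟨y2', hy2, hle2⟩ := ih2 hx2
      exact ⟨_, .altDelay hy1 hy2, .alt hle1 hle2⟩

theorem Embeds.sem {t : List (MyAction L M)} (h : Embeds x y) (hs : Sem x t) : Sem y t := by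
  induction hs generalizing y with
  | nil he => exact .nil (h.evades he)
  | cons hx _ ih =>
    obtain ⟨y', hy, hle⟩ := h.exec hx
    exact .cons hy (ih hle)

end Embeds

def actions : Interaction L M → Set (MyAction L M)
  | .empty => ∅
  | .act a => {a}
  | .loopS i => actions i
  | .strict i1 i2 => actions i1 ∪ actions i2
  | .alt i1 i2 => actions i1 ∪ actions i2
  | .cr _ i1 i2 => actions i1 ∪ actions i2

section Actions

variable {i j : Interaction L M} {s : Set L}

theorem Prune.actions_subset (h : Prune i s j) : actions j ⊆ actions i := by
  induction h with
  | empty | act => exact subset_rfl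
  | altL _ _ ih => exact ih.trans Set.subset_union_left
  | altR _ _ ih => exact ih.trans Set.subset_union_right
  | altBoth _ _ ih1 ih2 | strict _ _ ih1 ih2 | cr _ _ ih1 ih2 =>
    exact Set.union_subset_union ih1 ih2
  | loopS _ ih => exact ih
  | loopSElim => exact Set.empty_subset _

theorem Prune.lifeline_notMem (h : Prune i s j) : ∀ a ∈ actions j, a.lifeline ∉ s := by
  induction h with
  | empty => simp [actions]
  | act _ _ ha => simpa [actions]
  | altL _ _ ih | altR _ _ ih | loopS _ ih => exact ih
  | altBoth _ _ ih1 ih2 | strict _ _ ih1 ih2 | cr _ _ ih1 ih2 =>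
    exact fun a ha => ha.elim (ih1 a) (ih2 a)
  | loopSElim => simp [actions]

theorem Exec.mem_actions {a : MyAction L M} (h : Exec i a j) : a ∈ actions i := by
  induction h with
  | act => exact Set.mem_singleton _
  | loop _ ih => exact ih
  | strictL _ ih | crL _ ih | altChoiceL _ _ ih | altDelay _ _ ih _ => exact .inl ih
  | strictR _ _ ih | crR _ _ ih | altChoiceR _ _ ih => exact .inr ih

theorem Exec.actions_subset {a : MyAction L M} (h : Exec i a j) : actions j ⊆ actions i := by
  induction h with
  | act => exact Set.empty_subset _
  | loop _ ih => exact Set.union_subset ih subset_rfl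
  | strictL _ ih | crL _ ih => exact Set.union_subset_union ih subset_rfl
  | strictR _ _ ih => exact ih.trans Set.subset_union_right
  | crR _ hp ih => exact Set.union_subset_union hp.actions_subset ih
  | altChoiceL _ _ ih => exact ih.trans Set.subset_union_left
  | altChoiceR _ _ ih => exact ih.trans Set.subset_union_right
  | altDelay _ _ ih1 ih2 => exact Set.union_subset_union ih1 ih2

theorem Sem.mem_actions {t : List (MyAction L M)} (hs : Sem i t) : ∀ a ∈ t, a ∈ actions i := by
  induction hs with
  | nil => simp
  | cons hx _ ih =>
    rintro b (_ | ⟨_, hb⟩)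
    exacts [hx.mem_actions, hx.actions_subset (ih b hb)]

end Actions

section Backward

variable {a : MyAction L M} {ℓ : Set L}

theorem exists_exec_alt_prune_alt {i1x i2x i1p i2p : Interaction L M}
    (h1 : Evades i1x ℓ → ∃ j j0, Exec i1p a j ∧ Prune i1x ℓ j0 ∧ Embeds j0 j)
    (h2 : Evades i2x ℓ → ∃ j j0, Exec i2p a j ∧ Prune i2x ℓ j0 ∧ Embeds j0 j)
    (he : Evades (.alt i1x i2x) ℓ) :
    ∃ j j0, Exec (.alt i1p i2p) a j ∧ Prune (.alt i1x i2x) ℓ j0 ∧ Embeds j0 j := by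
  by_cases h1x : Evades i1x ℓ <;> by_cases h2x : Evades i2x ℓ
  · obtain ⟨j1, j01, hxj1, hpj1, hle1⟩ := h1 h1x
    obtain ⟨j2, j02, hxj2, hpj2, hle2⟩ := h2 h2x
    exact ⟨_, _, .altDelay hxj1 hxj2, .altBoth hpj1 hpj2, .alt hle1 hle2⟩
  · obtain ⟨j1, j01, hxj, hpj, hle⟩ := h1 h1x
    obtain ⟨p, hxp, hlep⟩ := hxj.alt_left i2p hle
    exact ⟨p, j01, hxp, .altL hpj h2x, hlep⟩
  · obtain ⟨j2, j02, hxj, hpj, hle⟩ := h2 h2x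
    obtain ⟨p, hxp, hlep⟩ := hxj.alt_right i1p hle
    exact ⟨p, j02, hxp, .altR hpj h1x, hlep⟩
  · exact absurd (evades_alt_iff.1 he) (by tauto)

theorem Exec.exists_prune {i i0 i' : Interaction L M} (h : Exec i a i0) (hp : Prune i ℓ i')
    (ha : a.lifeline ∉ ℓ) (he : Evades i0 ℓ) :
    ∃ j j0, Exec i' a j ∧ Prune i0 ℓ j0 ∧ Embeds j0 j := by
  induction h generalizing i' with
  | act =>
    cases hp
    exact ⟨_, _, .act _, .empty _, .refl _⟩
  | loop hx1 ih =>
    have h1x := (evades_strict_iff.1 he).1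
    cases hp with
    | loopS hp1 =>
      obtain ⟨j1, j01, hxj, hpj, hle⟩ := ih hp1 ha h1x
      exact ⟨_, _, .loop hxj, .strict hpj (.loopS hp1), .strict hle (.refl _)⟩
    | loopSElim hn => exact absurd (hx1.evades_of_evades ha h1x) hn
  | strictL _ ih => cases hp with
    | strict hp1 hp2 =>
      obtain ⟨j1, j01, hxj, hpj, hle⟩ := ih hp1 ha (evades_strict_iff.1 he).1
      exact ⟨_, _, .strictL hxj, .strict hpj hp2, .strict hle (.refl _)⟩
  | strictR _ hev ih => cases hp with
    | strict hp1 hp2 =>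
      obtain ⟨j2, j02, hxj, hpj, hle⟩ := ih hp2 ha he
      exact ⟨j2, j02, .strictR hxj (hp1.evades_univ hev), hpj, hle⟩
  | crL _ ih => cases hp with
    | cr hp1 hp2 =>
      obtain ⟨j1, j01, hxj, hpj, hle⟩ := ih hp1 ha (evades_cr_iff.1 he).1
      exact ⟨_, _, .crL hxj, .cr hpj hp2, .cr _ hle (.refl _)⟩
  | crR _ hpc ih => cases hp with
    | cr hp1 hp2 =>
      obtain ⟨h1, h2⟩ := evades_cr_iff.1 he
      obtain ⟨j2, j02, hxj, hpj, hle⟩ := ih hp2 ha h2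
      obtain ⟨q, hq1, hq2⟩ := hp1.comm hpc h1
      exact ⟨_, _, .crR hxj hq1, .cr hq2 hpj, .cr _ (.refl _) hle⟩
  | altChoiceL hx1 hn2 ih => cases hp with
    | altL hp1 _ => exact ih hp1 ha he
    | altR _ hn1 => exact absurd (hx1.evades_of_evades ha he) hn1
    | altBoth hp1 hp2 =>
      obtain ⟨j1, j01, hxj, hpj, hle⟩ := ih hp1 ha he
      exact ⟨j1, j01, .altChoiceL hxj (hn2.prune hp2), hpj, hle⟩
  | altChoiceR hx2 hn1 ih => cases hp with
    | altR hp2 _ => exact ih hp2 ha he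
    | altL _ hn2 => exact absurd (hx2.evades_of_evades ha he) hn2
    | altBoth hp1 hp2 =>
      obtain ⟨j2, j02, hxj, hpj, hle⟩ := ih hp2 ha he
      exact ⟨j2, j02, .altChoiceR hxj (hn1.prune hp1), hpj, hle⟩
  | altDelay hx1 hx2 ih1 ih2 => cases hp with
    | altL hp1 hn2 =>
      have h2x : ¬ Evades _ ℓ := mt (hx2.evades_of_evades ha) hn2
      obtain ⟨j1, j01, hxj, hpj, hle⟩ := ih1 hp1 ha ((evades_alt_iff.1 he).resolve_right h2x)
      exact ⟨j1, j01, hxj, .altL hpj h2x, hle⟩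
    | altR hp2 hn1 =>
      have h1x : ¬ Evades _ ℓ := mt (hx1.evades_of_evades ha) hn1
      obtain ⟨j2, j02, hxj, hpj, hle⟩ := ih2 hp2 ha ((evades_alt_iff.1 he).resolve_left h1x)
      exact ⟨j2, j02, hxj, .altR hpj h1x, hle⟩
    | altBoth hp1 hp2 =>
      exact exists_exec_alt_prune_alt (ih1 hp1 ha) (ih2 hp2 ha) he

theorem Sem.prune {i i' : Interaction L M} {t : List (MyAction L M)} (hs : Sem i t)
    (hp : Prune i ℓ i') (hav : ∀ a ∈ t, a.lifeline ∉ ℓ) : Sem i' t := by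
  induction hs generalizing i' with
  | nil he => exact .nil (hp.evades_univ he)
  | cons hx hs0 ih =>
    obtain ⟨ha, hav'⟩ := List.forall_mem_cons.1 hav
    obtain ⟨j, j0, hxj, hpj, hle⟩ := hx.exists_prune hp ha (hs0.evades_of_forall hav')
    exact .cons hxj (hle.sem (ih hpj hav'))

end Backward

end Interaction

open Interaction

theorem prune_sem_general {L M : Type} (ℓ : Set L)
    (i i' : Interaction L M) (h : Prune i ℓ i') :
    {t | Sem i' t} = {t | Sem i t ∧ ∀ a ∈ t, a.lifeline ∉ ℓ} := by
  ext t
  refine ⟨fun hs => ⟨h.embeds.sem hs, fun a ha => ?_⟩, fun ⟨hs, hav⟩ => hs.prune h hav⟩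
  exact h.lifeline_notMem a (hs.mem_actions a ha)

/-- if `i ⤳ℓ i'` then `σ(i')` is exactly the set of traces of `σ(i)`
all of whose actions occur outside `ℓ`. -/
theorem prune_sem {L M : Type} [Finite L] [Finite M] (ℓ : Set L)
    (i i' : Interaction L M) (h : Prune i ℓ i') :
    {t | Sem i' t} = {t | Sem i t ∧ ∀ a ∈ t, a.lifeline ∉ ℓ} :=
  prune_sem_general ℓ i i' h
end

section
/- Evasion characterizes the existence of avoiding traces: for every ℓ ⊆ L and interaction i ∈ I, i ↓ ℓ holds if and only if there exists a trace t ∈ σ(i) such that every action a occurring in t satisfies θ(a) ∉ ℓ. -/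
namespace Interaction

variable {L M : Type}

/-- Evasion is antitone in the lifeline set. -/
theorem evades_anti {i : Interaction L M} {s s' : Set L} (hs : s ⊆ s')
    (h : Evades i s') : Evades i s := by
  induction h with
  | empty => exact .empty _
  | act a _ h => exact .act a _ (fun hm => h (hs hm))
  | altL _ ih => exact .altL (ih hs)
  | altR _ ih => exact .altR (ih hs)
  | strict _ _ ih1 ih2 => exact .strict (ih1 hs) (ih2 hs)
  | cr _ _ ih1 ih2 => exact .cr (ih1 hs) (ih2 hs)
  | loopS i1 _ => exact .loopS i1 _

theorem prune_exists : ∀ (i : Interaction L M) (s : Set L), Evades i s →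
    ∃ i', Prune i s i'
  | .empty, s, _ => ⟨_, .empty s⟩
  | .act a, s, h => by cases h with | act _ _ hn => exact ⟨_, .act a s hn⟩
  | .loopS i1, s, _ => by
      by_cases h1 : Evades i1 s
      · obtain ⟨i1', p⟩ := prune_exists i1 s h1
        exact ⟨_, .loopS p⟩
      · exact ⟨_, .loopSElim h1⟩
  | .strict i1 i2, s, h => by
      cases h with
      | strict h1 h2 =>
        obtain ⟨i1', p1⟩ := prune_exists i1 s h1
        obtain ⟨i2', p2⟩ := prune_exists i2 s h2
        exact ⟨_, .strict p1 p2⟩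
  | .alt i1 i2, s, h => by
      by_cases h1 : Evades i1 s
      · obtain ⟨i1', p1⟩ := prune_exists i1 s h1
        by_cases h2 : Evades i2 s
        · obtain ⟨i2', p2⟩ := prune_exists i2 s h2
          exact ⟨_, .altBoth p1 p2⟩
        · exact ⟨_, .altL p1 h2⟩
      · cases h with
        | altL h1' => exact absurd h1' h1
        | altR h2 =>
          obtain ⟨i2', p2⟩ := prune_exists i2 s h2
          exact ⟨_, .altR p2 h1⟩
  | .cr ℓ' i1 i2, s, h => by
      cases h with
      | cr h1 h2 =>
        obtain ⟨i1', p1⟩ := prune_exists i1 s h1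
        obtain ⟨i2', p2⟩ := prune_exists i2 s h2
        exact ⟨_, .cr p1 p2⟩

/-- Pruning preserves universal evasion. -/
theorem prune_evades_univ {i i' : Interaction L M} {s : Set L}
    (hp : Prune i s i') (h : Evades i Set.univ) : Evades i' Set.univ := by
  induction hp with
  | empty => exact .empty _
  | act a s hn => exact h
  | altL p hn ih =>
    cases h with
    | altL h1 => exact ih h1
    | altR h2 => exact absurd (evades_anti (Set.subset_univ _) h2) hn
  | altR p hn ih =>
    cases h with
    | altL h1 => exact absurd (evades_anti (Set.subset_univ _) h1) hn
    | altR h2 => exact ih h2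
  | altBoth p1 p2 ih1 ih2 =>
    cases h with
    | altL h1 => exact .altL (ih1 h1)
    | altR h2 => exact .altR (ih2 h2)
  | strict p1 p2 ih1 ih2 =>
    cases h with
    | strict h1 h2 => exact .strict (ih1 h1) (ih2 h2)
  | cr p1 p2 ih1 ih2 =>
    cases h with
    | cr h1 h2 => exact .cr (ih1 h1) (ih2 h2)
  | loopS p ih => exact .loopS _ _
  | loopSElim hn => exact .empty _

/-- Pruning reflects evasion. -/
theorem prune_reflects_evades {i i' : Interaction L M} {s ℓ : Set L}
    (hp : Prune i s i') (h : Evades i' ℓ) : Evades i ℓ := by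
  induction hp with
  | empty => exact .empty _
  | act a s hn => exact h
  | altL p hn ih => exact .altL (ih h)
  | altR p hn ih => exact .altR (ih h)
  | altBoth p1 p2 ih1 ih2 =>
    cases h with
    | altL h1 => exact .altL (ih1 h1)
    | altR h2 => exact .altR (ih2 h2)
  | strict p1 p2 ih1 ih2 =>
    cases h with
    | strict h1 h2 => exact .strict (ih1 h1) (ih2 h2)
  | cr p1 p2 ih1 ih2 =>
    cases h with
    | cr h1 h2 => exact .cr (ih1 h1) (ih2 h2)
  | loopS p ih => exact .loopS _ _
  | loopSElim hn => exact .loopS _ _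

/-- Totality: every interaction either cannot express `a` or can execute it. -/
theorem noExpr_or_exec : ∀ (i : Interaction L M) (a : MyAction L M),
    NoExpr i a ∨ ∃ i', Exec i a i'
  | .empty, a => .inl (.empty a)
  | .act a', a => by
      by_cases h : a' = a
      · subst h; exact .inr ⟨_, .act a'⟩
      · exact .inl (.act h)
  | .loopS i1, a => by
      rcases noExpr_or_exec i1 a with h | ⟨i1', e⟩
      · exact .inl (.loopS h)
      · exact .inr ⟨_, .loop e⟩
  | .strict i1 i2, a => by
      rcases noExpr_or_exec i1 a with h1 | ⟨i1', e1⟩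
      · by_cases hv : Evades i1 Set.univ
        · rcases noExpr_or_exec i2 a with h2 | ⟨i2', e2⟩
          · exact .inl (.strictBoth h1 h2)
          · exact .inr ⟨_, .strictR e2 hv⟩
        · exact .inl (.strictNoEvade h1 hv)
      · exact .inr ⟨_, .strictL e1⟩
  | .cr ℓ' i1 i2, a => by
      rcases noExpr_or_exec i1 a with h1 | ⟨i1', e1⟩
      · by_cases hv : Evades i1 ({a.lifeline} \ ℓ')
        · rcases noExpr_or_exec i2 a with h2 | ⟨i2', e2⟩
          · exact .inl (.crBoth h1 h2)
          · obtain ⟨i1', p⟩ := prune_exists i1 _ hv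
            exact .inr ⟨_, .crR e2 p⟩
        · exact .inl (.crNoEvade h1 hv)
      · exact .inr ⟨_, .crL e1⟩
  | .alt i1 i2, a => by
      rcases noExpr_or_exec i1 a with h1 | ⟨i1', e1⟩ <;>
        rcases noExpr_or_exec i2 a with h2 | ⟨i2', e2⟩
      · exact .inl (.alt h1 h2)
      · exact .inr ⟨_, .altChoiceR e2 h1⟩
      · exact .inr ⟨_, .altChoiceL e1 h2⟩
      · exact .inr ⟨_, .altDelay e1 e2⟩

theorem sem_altL {i1 : Interaction L M} {t} (h : Sem i1 t) (i2 : Interaction L M) :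
    Sem (.alt i1 i2) t := by
  induction h generalizing i2 with
  | nil hv => exact .nil (.altL hv)
  | cons e hs ih =>
    rcases noExpr_or_exec i2 _ with h2 | ⟨i2', e2⟩
    · exact .cons (.altChoiceL e h2) hs
    · exact .cons (.altDelay e e2) (ih i2')

theorem sem_altR {i2 : Interaction L M} {t} (h : Sem i2 t) (i1 : Interaction L M) :
    Sem (.alt i1 i2) t := by
  induction h generalizing i1 with
  | nil hv => exact .nil (.altR hv)
  | cons e hs ih =>
    rcases noExpr_or_exec i1 _ with h1 | ⟨i1', e1⟩
    · exact .cons (.altChoiceR e h1) hs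
    · exact .cons (.altDelay e1 e) (ih i1')

theorem sem_strict_of_evades {i1 i2 : Interaction L M} {t}
    (hv : Evades i1 Set.univ) (h : Sem i2 t) : Sem (.strict i1 i2) t := by
  induction h with
  | nil hv2 => exact .nil (.strict hv hv2)
  | cons e hs ih => exact .cons (.strictR e hv) hs

theorem sem_strict {i1 i2 : Interaction L M} {t1 t2}
    (h1 : Sem i1 t1) (h2 : Sem i2 t2) : Sem (.strict i1 i2) (t1 ++ t2) := by
  induction h1 with
  | nil hv => exact sem_strict_of_evades hv h2
  | cons e hs ih => exact .cons (.strictL e) ih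

theorem sem_cr_of_evades {ℓ' : Set L} {i1 i2 : Interaction L M} {t}
    (hv : Evades i1 Set.univ) (h : Sem i2 t) : Sem (.cr ℓ' i1 i2) t := by
  induction h generalizing i1 with
  | nil hv2 => exact .nil (.cr hv hv2)
  | @cons _ _ a _ e hs ih =>
    obtain ⟨i1', p⟩ := prune_exists i1 ({a.lifeline} \ ℓ')
      (evades_anti (Set.subset_univ _) hv)
    exact .cons (.crR e p) (ih (prune_evades_univ p hv))

theorem sem_cr {ℓ' : Set L} {i1 i2 : Interaction L M} {t1 t2}
    (h1 : Sem i1 t1) (h2 : Sem i2 t2) : Sem (.cr ℓ' i1 i2) (t1 ++ t2) := by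
  induction h1 with
  | nil hv => exact sem_cr_of_evades hv h2
  | cons e hs ih => exact .cons (.crL e) ih

/-- Executing an action outside `ℓ` into an `ℓ`-evading interaction means
the original interaction evades `ℓ`. -/
theorem evades_of_exec {i i' : Interaction L M} {a : MyAction L M} {ℓ : Set L}
    (he : Exec i a i') (ha : a.lifeline ∉ ℓ) (h : Evades i' ℓ) : Evades i ℓ := by
  induction he with
  | act a => exact .act a ℓ ha
  | loop _ _ => exact .loopS _ _
  | strictL e ih =>
    cases h with
    | strict h1 h2 => exact .strict (ih ha h1) h2
  | crL e ih =>
    cases h with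
    | cr h1 h2 => exact .cr (ih ha h1) h2
  | strictR e hv ih =>
    exact .strict (evades_anti (Set.subset_univ _) hv) (ih ha h)
  | crR e p ih =>
    cases h with
    | cr h1 h2 => exact .cr (prune_reflects_evades p h1) (ih ha h2)
  | altChoiceL e hn ih => exact .altL (ih ha h)
  | altChoiceR e hn ih => exact .altR (ih ha h)
  | altDelay e1 e2 ih1 ih2 =>
    cases h with
    | altL h1 => exact .altL (ih1 ha h1)
    | altR h2 => exact .altR (ih2 ha h2)

end Interaction

open Interaction

/-- `i ↓ ℓ` holds iff `i` has a trace in which every action occurs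
on a lifeline outside `ℓ`. -/
theorem evades_iff_exists_avoiding_trace {L M : Type} [Finite L] [Finite M]
    (ℓ : Set L) (i : Interaction L M) :
    Evades i ℓ ↔ ∃ t, Sem i t ∧ ∀ a ∈ t, a.lifeline ∉ ℓ := by
  constructor
  · intro h
    induction h with
    | empty => exact ⟨[], .nil (.empty _), by simp⟩
    | act a _ ha =>
      exact ⟨[a], .cons (.act a) (.nil (.empty _)), by simpa using ha⟩
    | altL _ ih =>
      obtain ⟨t, hs, ht⟩ := ih
      exact ⟨t, sem_altL hs _, ht⟩
    | altR _ ih =>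
      obtain ⟨t, hs, ht⟩ := ih
      exact ⟨t, sem_altR hs _, ht⟩
    | strict _ _ ih1 ih2 =>
      obtain ⟨t1, hs1, ht1⟩ := ih1
      obtain ⟨t2, hs2, ht2⟩ := ih2
      refine ⟨t1 ++ t2, sem_strict hs1 hs2, ?_⟩
      intro a ha
      rcases List.mem_append.1 ha with h | h
      · exact ht1 a h
      · exact ht2 a h
    | cr _ _ ih1 ih2 =>
      obtain ⟨t1, hs1, ht1⟩ := ih1
      obtain ⟨t2, hs2, ht2⟩ := ih2
      refine ⟨t1 ++ t2, sem_cr hs1 hs2, ?_⟩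
      intro a ha
      rcases List.mem_append.1 ha with h | h
      · exact ht1 a h
      · exact ht2 a h
    | loopS i1 _ => exact ⟨[], .nil (.loopS i1 _), by simp⟩
  · rintro ⟨t, hs, ht⟩
    induction hs with
    | nil hv => exact evades_anti (Set.subset_univ _) hv
    | @cons _ _ a _ e _ ih =>
      exact evades_of_exec e (ht a (by simp)) (ih fun b hb => ht b (by simp [hb]))
end

section
/- The non-expression predicate is the complement of one-step executability: for every interaction i ∈ I and every action a ∈ A, i ̸→a holds if and only if there exists no interaction i' ∈ I with i →a i'. -/
open Interaction

lemma prune_evades {L M : Type} {i i' : Interaction L M} {ℓ : Set L}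
    (h : Prune i ℓ i') : Evades i ℓ := by
  induction h with
  | empty => exact .empty _
  | act a ℓ h => exact .act a ℓ h
  | altL _ _ ih => exact .altL ih
  | altR _ _ ih => exact .altR ih
  | altBoth _ _ ih1 ih2 => exact .altL ih1
  | strict _ _ ih1 ih2 => exact .strict ih1 ih2
  | cr _ _ ih1 ih2 => exact .cr ih1 ih2
  | loopS _ _ => exact .loopS _ _
  | loopSElim _ => exact .loopS _ _

lemma evades_prune {L M : Type} {i : Interaction L M} {ℓ : Set L}
    (h : Evades i ℓ) : ∃ i', Prune i ℓ i' := by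
  induction i with
  | empty => exact ⟨_, .empty ℓ⟩
  | act a =>
    cases h with
    | act _ _ hn => exact ⟨_, .act a ℓ hn⟩
  | loopS i1 ih =>
    by_cases he : Evades i1 ℓ
    · obtain ⟨i1', hp⟩ := ih he
      exact ⟨_, .loopS hp⟩
    · exact ⟨_, .loopSElim he⟩
  | strict i1 i2 ih1 ih2 =>
    cases h with
    | strict h1 h2 =>
      obtain ⟨i1', hp1⟩ := ih1 h1
      obtain ⟨i2', hp2⟩ := ih2 h2
      exact ⟨_, .strict hp1 hp2⟩
  | alt i1 i2 ih1 ih2 =>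
    by_cases h1 : Evades i1 ℓ <;> by_cases h2 : Evades i2 ℓ
    · obtain ⟨i1', hp1⟩ := ih1 h1
      obtain ⟨i2', hp2⟩ := ih2 h2
      exact ⟨_, .altBoth hp1 hp2⟩
    · obtain ⟨i1', hp1⟩ := ih1 h1
      exact ⟨_, .altL hp1 h2⟩
    · obtain ⟨i2', hp2⟩ := ih2 h2
      exact ⟨_, .altR hp2 h1⟩
    · cases h with
      | altL h => exact absurd h h1
      | altR h => exact absurd h h2
  | cr ℓ' i1 i2 ih1 ih2 =>
    cases h with
    | cr h1 h2 =>
      obtain ⟨i1', hp1⟩ := ih1 h1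
      obtain ⟨i2', hp2⟩ := ih2 h2
      exact ⟨_, .cr hp1 hp2⟩

lemma noExpr_not_exec {L M : Type} {i : Interaction L M} {a : MyAction L M}
    (h : NoExpr i a) : ¬ ∃ i', Exec i a i' := by
  induction h with
  | empty => rintro ⟨i', he⟩; cases he
  | act hne => rintro ⟨i', he⟩; cases he; exact hne rfl
  | loopS _ ih =>
    rintro ⟨i', he⟩
    cases he with
    | loop h1 => exact ih ⟨_, h1⟩
  | strictNoEvade _ hev ih =>
    rintro ⟨i', he⟩
    cases he with
    | strictL h1 => exact ih ⟨_, h1⟩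
    | strictR _ hv => exact hev hv
  | strictBoth _ _ ih1 ih2 =>
    rintro ⟨i', he⟩
    cases he with
    | strictL h1 => exact ih1 ⟨_, h1⟩
    | strictR h2 _ => exact ih2 ⟨_, h2⟩
  | crNoEvade _ hev ih =>
    rintro ⟨i', he⟩
    cases he with
    | crL h1 => exact ih ⟨_, h1⟩
    | crR _ hp => exact hev (prune_evades hp)
  | crBoth _ _ ih1 ih2 =>
    rintro ⟨i', he⟩
    cases he with
    | crL h1 => exact ih1 ⟨_, h1⟩
    | crR h2 _ => exact ih2 ⟨_, h2⟩
  | alt _ _ ih1 ih2 =>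
    rintro ⟨i', he⟩
    cases he with
    | altChoiceL h1 _ => exact ih1 ⟨_, h1⟩
    | altChoiceR h2 _ => exact ih2 ⟨_, h2⟩
    | altDelay h1 _ => exact ih1 ⟨_, h1⟩

lemma not_exec_noExpr {L M : Type} {i : Interaction L M} (a : MyAction L M)
    (h : ¬ ∃ i', Exec i a i') : NoExpr i a := by
  induction i with
  | empty => exact .empty a
  | act a' =>
    by_cases heq : a' = a
    · subst heq; exact absurd ⟨_, .act a'⟩ h
    · exact .act heq
  | loopS i1 ih =>
    refine .loopS (ih ?_)
    rintro ⟨i1', h1⟩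
    exact h ⟨_, .loop h1⟩
  | strict i1 i2 ih1 ih2 =>
    have hn1 : NoExpr i1 a := ih1 (fun ⟨i1', h1⟩ => h ⟨_, .strictL h1⟩)
    by_cases hev : Evades i1 Set.univ
    · refine .strictBoth hn1 (ih2 ?_)
      rintro ⟨i2', h2⟩
      exact h ⟨_, .strictR h2 hev⟩
    · exact .strictNoEvade hn1 hev
  | alt i1 i2 ih1 ih2 =>
    by_cases h2 : ∃ i2', Exec i2 a i2'
    · obtain ⟨i2', he2⟩ := h2
      have hn1 : NoExpr i1 a := ih1 (fun ⟨i1', h1⟩ => h ⟨_, .altDelay h1 he2⟩)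
      exact absurd ⟨_, .altChoiceR he2 hn1⟩ h
    · have hn2 : NoExpr i2 a := ih2 h2
      have hn1 : NoExpr i1 a := ih1 (fun ⟨i1', h1⟩ => h ⟨_, .altChoiceL h1 hn2⟩)
      exact .alt hn1 hn2
  | cr ℓ i1 i2 ih1 ih2 =>
    have hn1 : NoExpr i1 a := ih1 (fun ⟨i1', h1⟩ => h ⟨_, .crL h1⟩)
    by_cases hev : Evades i1 ({a.lifeline} \ ℓ)
    · obtain ⟨i1', hp⟩ := evades_prune hev
      refine .crBoth hn1 (ih2 ?_)
      rintro ⟨i2', h2⟩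
      exact h ⟨_, .crR h2 hp⟩
    · exact .crNoEvade hn1 hev

/-- the non-expression predicate is the complement of one-step
executability: `i ̸→a` iff there is no `i'` with `i →a i'`. -/
theorem noExpr_iff_not_exec {L M : Type} [Finite L] [Finite M]
    (i : Interaction L M) (a : MyAction L M) :
    NoExpr i a ↔ ¬ ∃ i', Exec i a i' :=
  ⟨noExpr_not_exec, not_exec_noExpr a⟩
end

section
/- For every interaction i1 ∈ I, reach(loop_S(i1)) ⊆ {loop_S(i1)} ∪ { strict(j, loop_S(i1)) | j ∈ reach(i1) }. -/
open Interaction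

/-- `reach(loop_S(i1)) ⊆ {loop_S(i1)} ∪ { strict(j, loop_S(i1)) | j ∈ reach(i1) }`. -/
theorem reach_loopS_subset {L M : Type} [Finite L] [Finite M] (i1 : Interaction L M) :
    Reach (Interaction.loopS i1) ⊆
      {Interaction.loopS i1} ∪
        {j | ∃ j1 ∈ Reach i1, j = Interaction.strict j1 (Interaction.loopS i1)} := by
  intro x hx
  induction hx with
  | refl => exact Or.inl rfl
  | tail h' step ih =>
    obtain ⟨a, hex⟩ := step
    rcases ih with h | ⟨j1, hj1, rfl⟩
    · rw [Set.mem_singleton_iff] at h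
      subst h
      cases hex with
      | loop h1 =>
        exact Or.inr ⟨_, Relation.ReflTransGen.single ⟨_, h1⟩, rfl⟩
    · cases hex with
      | strictL h1 =>
        exact Or.inr ⟨_, Relation.ReflTransGen.tail hj1 ⟨_, h1⟩, rfl⟩
      | strictR h2 hev =>
        cases h2 with
        | loop h1 =>
          exact Or.inr ⟨_, Relation.ReflTransGen.single ⟨_, h1⟩, rfl⟩
end

section
/- For all interactions i1, i2 ∈ I, reach(alt(i1,i2)) ⊆ {alt(i1,i2)} ∪ reach(i1) ∪ reach(i2) ∪ { alt(j1,j2) | j1 ∈ reach(i1), j2 ∈ reach(i2) }. -/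
open Interaction

/-- `reach(alt(i1,i2)) ⊆ {alt(i1,i2)} ∪ reach(i1) ∪ reach(i2)
∪ { alt(j1,j2) | j1 ∈ reach(i1), j2 ∈ reach(i2) }`. -/
theorem reach_alt_subset {L M : Type} [Finite L] [Finite M] (i1 i2 : Interaction L M) :
    Reach (Interaction.alt i1 i2) ⊆
      {Interaction.alt i1 i2} ∪ Reach i1 ∪ Reach i2 ∪
        {j | ∃ j1 ∈ Reach i1, ∃ j2 ∈ Reach i2, j = Interaction.alt j1 j2} := by
  intro j hj
  have key : j ∈ Reach i1 ∨ j ∈ Reach i2 ∨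
      ∃ j1 ∈ Reach i1, ∃ j2 ∈ Reach i2, j = Interaction.alt j1 j2 := by
    induction hj with
    | refl =>
        right; right
        exact ⟨i1, Relation.ReflTransGen.refl, i2, Relation.ReflTransGen.refl, rfl⟩
    | tail h step ih =>
        rcases ih with h1 | h2 | ⟨j1, hj1, j2, hj2, rfl⟩
        · exact Or.inl (h1.tail step)
        · exact Or.inr (Or.inl (h2.tail step))
        · obtain ⟨a, hex⟩ := step
          cases hex with
          | altChoiceL he _ => exact Or.inl (hj1.tail ⟨a, he⟩)
          | altChoiceR he _ => exact Or.inr (Or.inl (hj2.tail ⟨a, he⟩))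
          | altDelay he1 he2 =>
              exact Or.inr (Or.inr ⟨_, hj1.tail ⟨a, he1⟩, _, hj2.tail ⟨a, he2⟩, rfl⟩)
  rcases key with h | h | h
  · exact Or.inl (Or.inl (Or.inr h))
  · exact Or.inl (Or.inr h)
  · exact Or.inr h
end

section
/- For every n ≥ 1, every nondeterministic finite automaton over the alphabet with n letters whose recognized language is exactly the set of words in which each of the n letters occurs exactly once (i.e., all permutations of the n letters) has at least 2^n states. -/
open Set

lemma nfa_evalFrom_append {α σ : Type*} (N : NFA α σ) (S : Set σ) (u v : List α) :
    N.evalFrom S (u ++ v) = N.evalFrom (N.evalFrom S u) v := by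
  simp [NFA.evalFrom, List.foldl_append]

lemma nfa_evalFrom_mono {α σ : Type*} (N : NFA α σ) {S T : Set σ} (h : S ⊆ T) (w : List α) :
    N.evalFrom S w ⊆ N.evalFrom T w := by
  induction w generalizing S T with
  | nil => exact h
  | cons a w ih =>
    apply ih
    intro q hq
    rw [NFA.mem_stepSet] at hq ⊢
    obtain ⟨t, ht, hs⟩ := hq
    exact ⟨t, h ht, hs⟩

lemma nfa_evalFrom_exists {α σ : Type*} (N : NFA α σ) {S : Set σ} {w : List α} {f : σ}
    (hf : f ∈ N.evalFrom S w) : ∃ q ∈ S, f ∈ N.evalFrom {q} w := by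
  induction w generalizing S with
  | nil => exact ⟨f, hf, rfl⟩
  | cons a w ih =>
    obtain ⟨q', hq', hf'⟩ := ih hf
    rw [NFA.mem_stepSet] at hq'
    obtain ⟨q, hq, hstep⟩ := hq'
    refine ⟨q, hq, ?_⟩
    show f ∈ N.evalFrom (N.stepSet {q} a) w
    refine nfa_evalFrom_mono N ?_ w hf'
    intro x hx
    rw [NFA.mem_stepSet]
    exact ⟨q, rfl, hx ▸ hstep⟩

lemma count_toList_append {n : ℕ} (S T : Finset (Fin n)) (x : Fin n) :
    (S.toList ++ T.toList).count x =
      (if x ∈ S then 1 else 0) + (if x ∈ T then 1 else 0) := by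
  rw [List.count_append]
  congr 1
  · by_cases h : x ∈ S
    · simp only [h, if_true]
      exact List.count_eq_one_of_mem S.nodup_toList (Finset.mem_toList.2 h)
    · simp only [h, if_false]
      exact List.count_eq_zero.2 (by simpa using h)
  · by_cases h : x ∈ T
    · simp only [h, if_true]
      exact List.count_eq_one_of_mem T.nodup_toList (Finset.mem_toList.2 h)
    · simp only [h, if_false]
      exact List.count_eq_zero.2 (by simpa using h)

/-- for every `n ≥ 1`, every nondeterministic finite automaton over an
`n`-letter alphabet recognizing exactly the words in which each letter occurs exactly
once (all permutations of the `n` letters) has at least `2 ^ n` states. -/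
theorem perm_language_nfa_state_lower_bound (n : ℕ) (hn : 1 ≤ n)
    (Q : Type) [Finite Q] (N : NFA (Fin n) Q)
    (hN : N.accepts = {w : List (Fin n) | ∀ x : Fin n, w.count x = 1}) :
    2 ^ n ≤ Nat.card Q := by
  -- every word S.toList ++ Sᶜ.toList is accepted
  have haccept : ∀ S : Finset (Fin n), (S.toList ++ Sᶜ.toList) ∈ N.accepts := by
    intro S
    rw [hN]
    intro x
    rw [count_toList_append]
    by_cases h : x ∈ S <;> simp [h]
  -- choose an intermediate state for each S
  have hmid : ∀ S : Finset (Fin n), ∃ q : Q, q ∈ N.evalFrom N.start S.toList ∧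
      ∃ f ∈ N.accept, f ∈ N.evalFrom {q} Sᶜ.toList := by
    intro S
    obtain ⟨f, hfacc, hf⟩ := (N.mem_accepts).1 (haccept S)
    rw [nfa_evalFrom_append] at hf
    obtain ⟨q, hq, hfq⟩ := nfa_evalFrom_exists N hf
    exact ⟨q, hq, f, hfacc, hfq⟩
  choose g hg1 hg2 using hmid
  -- g is injective
  have hinj : Function.Injective g := by
    have key : ∀ S T : Finset (Fin n), g S = g T → S ⊆ T := by
      intro S T hgST x hxS
      by_contra hxT
      -- then S.toList ++ Tᶜ.toList is accepted, but x appears twice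
      obtain ⟨f, hfacc, hf⟩ := hg2 T
      have : (S.toList ++ Tᶜ.toList) ∈ N.accepts := by
        rw [N.mem_accepts]
        refine ⟨f, hfacc, ?_⟩
        rw [nfa_evalFrom_append]
        refine nfa_evalFrom_mono N ?_ _ (hgST ▸ hf)
        simpa using hg1 S
      rw [hN] at this
      have hx := this x
      rw [count_toList_append] at hx
      simp [hxS, hxT] at hx
    intro S T h
    exact Finset.Subset.antisymm (key S T h) (key T S h.symm)
  calc 2 ^ n = Nat.card (Finset (Fin n)) := by simp
    _ ≤ Nat.card Q := Nat.card_le_card_of_injective g hinj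
end
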